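/- Let W = (W₁, …, Wₙ) have i.i.d. N(0, σ²) coordinates (i.e., W is distributed according to the n-fold product of the Gaussian measure N(0, σ²)), σ > 0, and let F : ℝⁿ → ℝⁿ be continuously differentiable with each coordinate Fⱼ and each partial derivative ∂Fⱼ/∂xⱼ integrable against this Gaussian measure, E|⟨W, F(W)⟩| < ∞, and F of at most polynomial growth. Then E[⟨W, F(W)⟩] = σ² E[div F(W)], where div F(x) = Σⱼ₌₁ⁿ ∂Fⱼ/∂xⱼ(x). -/

import Mathlib

open MeasureTheory ProbabilityTheory

open MeasureTheory ProbabilityTheory Real Filter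


-- poly times gaussian integrable (Lebesgue)
lemma polyGauss_integrable {b : ℝ} (hb : 0 < b) (k : ℕ) :
    Integrable (fun x : ℝ => (1 + |x|) ^ k * Real.exp (-b * x ^ 2)) := by
  have h1 : Integrable (fun x : ℝ => |x| ^ k * Real.exp (-b * x ^ 2)) := by
    have := (integrable_rpow_mul_exp_neg_mul_sq hb (s := k)
      (by exact_mod_cast lt_of_lt_of_le neg_one_lt_zero (Nat.cast_nonneg k) : (-1:ℝ) < (k:ℝ))).abs
    refine this.congr (ae_of_all _ fun x => ?_)
    simp only [abs_mul, abs_of_nonneg (Real.exp_pos _).le, Real.rpow_natCast, abs_pow]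
  have h2 : Integrable (fun x : ℝ => Real.exp (-b * x ^ 2)) := integrable_exp_neg_mul_sq hb
  have h3 := (h1.const_mul ((2:ℝ)^k)).add (h2.const_mul ((2:ℝ)^k))
  refine h3.mono' ?_ (ae_of_all _ fun x => ?_)
  · exact (((continuous_const.add continuous_abs).pow k).mul
      ((continuous_const.mul (continuous_pow 2)).rexp)).aestronglyMeasurable
  · have hx : (0:ℝ) ≤ |x| := abs_nonneg x
    have hbnd : (1 + |x|) ^ k ≤ 2 ^ k * |x| ^ k + 2 ^ k := by
      rcases le_total (|x|) 1 with h | h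
      · calc (1 + |x|) ^ k ≤ 2 ^ k := by
              apply pow_le_pow_left₀ (by positivity) (by linarith)
            _ ≤ 2 ^ k * |x| ^ k + 2 ^ k := by nlinarith [pow_nonneg hx k, pow_pos (zero_lt_two' ℝ) k]
      · calc (1 + |x|) ^ k ≤ (2 * |x|) ^ k := by
              apply pow_le_pow_left₀ (by positivity) (by linarith)
            _ = 2 ^ k * |x| ^ k := mul_pow 2 _ k
            _ ≤ 2 ^ k * |x| ^ k + 2 ^ k := by nlinarith [pow_nonneg hx k, pow_pos (zero_lt_two' ℝ) k]
    have he : (0:ℝ) < Real.exp (-b * x ^ 2) := Real.exp_pos _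
    rw [Real.norm_eq_abs, abs_of_nonneg (by positivity)]
    calc (1 + |x|) ^ k * Real.exp (-b * x ^ 2)
        ≤ (2 ^ k * |x| ^ k + 2 ^ k) * Real.exp (-b * x ^ 2) := by
          exact mul_le_mul_of_nonneg_right hbnd he.le
      _ = 2 ^ k * (|x| ^ k * Real.exp (-b * x ^ 2)) + 2 ^ k * Real.exp (-b * x ^ 2) := by ring

-- poly times gaussian tends to 0 at ±∞
lemma polyGauss_tendsto_atTop {b : ℝ} (hb : 0 < b) (k : ℕ) :
    Tendsto (fun x : ℝ => (1 + |x|) ^ k * Real.exp (-b * x ^ 2)) atTop (nhds 0) := by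
  have hcomp : Tendsto (fun x : ℝ => (b * x ^ 2) ^ k * Real.exp (-(b * x ^ 2))) atTop (nhds 0) := by
    apply (tendsto_pow_mul_exp_neg_atTop_nhds_zero k).comp
    exact (tendsto_pow_atTop two_ne_zero).const_mul_atTop hb
  have := hcomp.const_mul ((2 / b) ^ k)
  rw [mul_zero] at this
  apply squeeze_zero' ?_ ?_ this
  · filter_upwards [eventually_ge_atTop (0:ℝ)] with x hx
    positivity
  · filter_upwards [eventually_ge_atTop (max 1 b⁻¹)] with x hx
    have hx1 : (1:ℝ) ≤ x := le_trans (le_max_left _ _) hx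
    have hxb : b⁻¹ ≤ x := le_trans (le_max_right _ _) hx
    have h0 : (0:ℝ) ≤ x := by linarith
    rw [abs_of_nonneg h0]
    have key : (1 + x) ^ k ≤ (2 / b) ^ k * (b * x ^ 2) ^ k := by
      rw [← mul_pow]
      apply pow_le_pow_left₀ (by linarith)
      have : (2 / b) * (b * x ^ 2) = 2 * x ^ 2 := by field_simp
      rw [this]
      nlinarith
    have := mul_le_mul_of_nonneg_right key (Real.exp_pos (-(b * x ^ 2))).le
    calc (1 + x) ^ k * Real.exp (-b * x ^ 2)
        = (1 + x) ^ k * Real.exp (-(b * x ^ 2)) := by rw [neg_mul]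
      _ ≤ (2 / b) ^ k * (b * x ^ 2) ^ k * Real.exp (-(b * x ^ 2)) := this
      _ = (2 / b) ^ k * ((b * x ^ 2) ^ k * Real.exp (-(b * x ^ 2))) := by ring

lemma polyGauss_tendsto_atBot {b : ℝ} (hb : 0 < b) (k : ℕ) :
    Tendsto (fun x : ℝ => (1 + |x|) ^ k * Real.exp (-b * x ^ 2)) atBot (nhds 0) := by
  have := (polyGauss_tendsto_atTop hb k).comp tendsto_neg_atBot_atTop
  refine this.congr fun x => ?_
  simp [Function.comp, abs_neg]

section OneDim

instance gaussianReal_sq_isProb (σ : ℝ) :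
    IsProbabilityMeasure (gaussianReal 0 (⟨σ ^ 2, sq_nonneg σ⟩ : NNReal)) :=
  instIsProbabilityMeasureGaussianReal _ _

lemma coe_sq_mk (σ : ℝ) : ((⟨σ ^ 2, sq_nonneg σ⟩ : NNReal) : ℝ) = σ ^ 2 := rfl

variable {σ : ℝ}

lemma vne (hσ : 0 < σ) : (⟨σ ^ 2, sq_nonneg σ⟩ : NNReal) ≠ 0 := by
  intro h
  have := congrArg NNReal.toReal h
  change σ ^ 2 = 0 at this
  nlinarith

lemma gaussianReal_eq_withDensity (hσ : 0 < σ) :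
    gaussianReal 0 ⟨σ ^ 2, sq_nonneg σ⟩
      = volume.withDensity
          (fun x => ((gaussianPDFReal 0 ⟨σ ^ 2, sq_nonneg σ⟩ x).toNNReal : ENNReal)) := by
  rw [gaussianReal_of_var_ne_zero 0 (vne hσ)]
  rfl

lemma integral_gauss_eq (hσ : 0 < σ) (g : ℝ → ℝ) :
    ∫ x, g x ∂(gaussianReal 0 ⟨σ ^ 2, sq_nonneg σ⟩)
      = ∫ x, gaussianPDFReal 0 ⟨σ ^ 2, sq_nonneg σ⟩ x * g x := by
  rw [gaussianReal_eq_withDensity hσ]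
  erw [integral_withDensity_eq_integral_smul (measurable_gaussianPDFReal _ _).real_toNNReal g]
  congr 1
  ext x
  simp [NNReal.smul_def, Real.coe_toNNReal _ (gaussianPDFReal_nonneg _ _ x)]
  exact Or.inl (gaussianPDFReal_nonneg _ _ x)

lemma integrable_gauss_iff (hσ : 0 < σ) (g : ℝ → ℝ) :
    Integrable g (gaussianReal 0 ⟨σ ^ 2, sq_nonneg σ⟩)
      ↔ Integrable (fun x => gaussianPDFReal 0 ⟨σ ^ 2, sq_nonneg σ⟩ x * g x) := by
  rw [gaussianReal_eq_withDensity hσ]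
  erw [integrable_withDensity_iff_integrable_smul (measurable_gaussianPDFReal _ _).real_toNNReal]
  constructor <;> intro h <;> refine h.congr (ae_of_all _ fun x => ?_) <;>
    simp [NNReal.smul_def, Real.coe_toNNReal _ (gaussianPDFReal_nonneg _ _ x)] <;>
    exact Or.inl (gaussianPDFReal_nonneg _ _ x)

lemma hasDerivAt_gaussPdf (hσ : 0 < σ) (x : ℝ) :
    HasDerivAt (gaussianPDFReal 0 ⟨σ ^ 2, sq_nonneg σ⟩)
      (-(x / σ ^ 2) * gaussianPDFReal 0 ⟨σ ^ 2, sq_nonneg σ⟩ x) x := by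
  have hσ2 : (0:ℝ) < σ ^ 2 := by positivity
  show HasDerivAt (fun y => (√(2 * π * σ ^ 2))⁻¹ * rexp (-(y - 0) ^ 2 / (2 * σ ^ 2)))
    (-(x / σ ^ 2) * ((√(2 * π * σ ^ 2))⁻¹ * rexp (-(x - 0) ^ 2 / (2 * σ ^ 2)))) x
  have h1 : HasDerivAt (fun y : ℝ => y - 0) 1 x := (hasDerivAt_id x).sub_const 0
  have h2 := (h1.pow 2).neg.div_const (2 * σ ^ 2)
  have h3 := (h2.exp).const_mul (√(2 * π * σ ^ 2))⁻¹
  refine h3.congr_deriv ?_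
  simp only [Pi.neg_apply, Pi.pow_apply]
  field_simp
  ring

/-- One-dimensional Stein identity. -/
lemma stein1D (hσ : 0 < σ) {f : ℝ → ℝ} (hf : ContDiff ℝ 1 f)
    (hgrow : ∃ C : ℝ, ∃ k : ℕ, ∀ x, |f x| ≤ C * (1 + |x|) ^ k)
    (hint : Integrable (deriv f) (gaussianReal 0 ⟨σ ^ 2, sq_nonneg σ⟩)) :
    ∫ x, x * f x ∂(gaussianReal 0 ⟨σ ^ 2, sq_nonneg σ⟩)
      = σ ^ 2 * ∫ x, deriv f x ∂(gaussianReal 0 ⟨σ ^ 2, sq_nonneg σ⟩) := by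
  obtain ⟨C, k, hC⟩ := hgrow
  have hσ2 : (0:ℝ) < σ ^ 2 := by positivity
  have hC0 : 0 ≤ C := by
    have := (abs_nonneg (f 0)).trans (hC 0)
    simpa using this
  set φ : ℝ → ℝ := gaussianPDFReal 0 ⟨σ ^ 2, sq_nonneg σ⟩ with hφ
  have hφ_nonneg : ∀ x, 0 ≤ φ x := gaussianPDFReal_nonneg _ _
  set b : ℝ := (2 * σ ^ 2)⁻¹ with hbdef
  have hb : 0 < b := by positivity
  set c : ℝ := (√(2 * π * σ ^ 2))⁻¹ with hcdef
  have hc0 : 0 ≤ c := by positivity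
  have hφeq : ∀ x, φ x = c * Real.exp (-b * x ^ 2) := by
    intro x
    simp only [hφ, gaussianPDFReal, NNReal.coe_mk, hcdef, hbdef]
    congr 1
    rw [sub_zero]
    congr 1
    change -x ^ 2 / (2 * σ ^ 2) = -(2 * σ ^ 2)⁻¹ * x ^ 2
    field_simp
  have hφcont : Continuous φ := by
    have : φ = fun x => c * Real.exp (-b * x ^ 2) := funext hφeq
    rw [this]
    exact continuous_const.mul ((continuous_const.mul (continuous_pow 2)).rexp)
  have hfd : Differentiable ℝ f := hf.differentiable one_ne_zero
  have hG : ∀ x, HasDerivAt (fun y => f y * φ y)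
      (deriv f x * φ x + f x * (-(x / σ ^ 2) * φ x)) x :=
    fun x => (hfd x).hasDerivAt.mul (hasDerivAt_gaussPdf hσ x)
  -- integrability of the two parts of the derivative (Lebesgue)
  have hA : Integrable (fun x => deriv f x * φ x) := by
    have := (integrable_gauss_iff hσ (deriv f)).1 hint
    exact this.congr (ae_of_all _ fun x => mul_comm _ _)
  have hB : Integrable (fun x => f x * (-(x / σ ^ 2) * φ x)) := by
    refine ((polyGauss_integrable hb (k + 1)).const_mul (C * c / σ ^ 2)).mono' ?_
      (ae_of_all _ fun x => ?_)
    · exact (hfd.continuous.mul ((continuous_id.div_const _).neg.mul hφcont)).aestronglyMeasurable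
    · rw [Real.norm_eq_abs, abs_mul, abs_mul, abs_neg, abs_div, abs_of_nonneg (hφ_nonneg x),
        abs_of_nonneg hσ2.le, hφeq x]
      have h1 : |f x| ≤ C * (1 + |x|) ^ k := hC x
      have h2 : |x| ≤ 1 + |x| := by linarith [abs_nonneg x]
      have hexp : (0:ℝ) < Real.exp (-b * x ^ 2) := Real.exp_pos _
      have hpk : (0:ℝ) ≤ (1 + |x|) ^ k := by positivity
      have h3 : |f x| * |x| ≤ C * (1 + |x|) ^ k * (1 + |x|) :=
        mul_le_mul h1 h2 (abs_nonneg x) (by positivity)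
      calc |f x| * (|x| / σ ^ 2 * (c * Real.exp (-b * x ^ 2)))
          = |f x| * |x| * (c * Real.exp (-b * x ^ 2) / σ ^ 2) := by ring
        _ ≤ C * (1 + |x|) ^ k * (1 + |x|) * (c * Real.exp (-b * x ^ 2) / σ ^ 2) :=
            mul_le_mul_of_nonneg_right h3 (by positivity)
        _ = C * c / σ ^ 2 * ((1 + |x|) ^ (k + 1) * Real.exp (-b * x ^ 2)) := by
            rw [pow_succ]; ring
  -- the product f·φ tends to 0 at ±∞
  have hbound : ∀ x, ‖f x * φ x‖ ≤ C * c * ((1 + |x|) ^ k * Real.exp (-b * x ^ 2)) := by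
    intro x
    rw [Real.norm_eq_abs, abs_mul, abs_of_nonneg (hφ_nonneg x), hφeq x]
    calc |f x| * (c * Real.exp (-b * x ^ 2))
        ≤ C * (1 + |x|) ^ k * (c * Real.exp (-b * x ^ 2)) :=
          mul_le_mul_of_nonneg_right (hC x) (by positivity)
      _ = C * c * ((1 + |x|) ^ k * Real.exp (-b * x ^ 2)) := by ring
  have htop : Tendsto (fun x => f x * φ x) atTop (nhds 0) := by
    have := (polyGauss_tendsto_atTop hb k).const_mul (C * c)
    rw [mul_zero] at this
    exact squeeze_zero_norm hbound this
  have hbot : Tendsto (fun x => f x * φ x) atBot (nhds 0) := by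
    have := (polyGauss_tendsto_atBot hb k).const_mul (C * c)
    rw [mul_zero] at this
    exact squeeze_zero_norm hbound this
  have hzero : ∫ x, (deriv f x * φ x + f x * (-(x / σ ^ 2) * φ x)) = (0:ℝ) := by
    rw [MeasureTheory.integral_of_hasDerivAt_of_tendsto hG (hA.add hB) hbot htop]
    simp
  rw [integral_add hA hB] at hzero
  have hBval : ∫ x, f x * (-(x / σ ^ 2) * φ x)
      = -(σ ^ 2)⁻¹ * ∫ x, φ x * (x * f x) := by
    rw [← integral_const_mul]
    congr 1
    ext x
    field_simp
  rw [hBval] at hzero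
  rw [integral_gauss_eq hσ, integral_gauss_eq hσ]
  have : ∫ x, φ x * deriv f x = ∫ x, deriv f x * φ x :=
    integral_congr_ae (ae_of_all _ fun x => mul_comm _ _)
  rw [this]
  have h2 : ∫ x, φ x * (x * f x) = σ ^ 2 * ∫ x, deriv f x * φ x := by
    have := hzero
    field_simp at this ⊢
    linarith
  exact h2

end OneDim

/-- The `n`-fold product of the Gaussian measure `N(0, σ²)` on `ℝⁿ`, i.e. the law of a
random vector with i.i.d. `N(0, σ²)` coordinates. -/
noncomputable def gaussPi (n : ℕ) (σ : ℝ) : Measure (Fin n → ℝ) :=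
  Measure.pi fun _ => gaussianReal 0 ⟨σ ^ 2, sq_nonneg σ⟩

section Moments

variable {σ : ℝ}

lemma gaussPi_isProb (σ : ℝ) (n : ℕ) : IsProbabilityMeasure (gaussPi n σ) := by
  rw [gaussPi]; infer_instance

lemma gaussianPDFReal_exp (hσ : 0 < σ) (x : ℝ) :
    gaussianPDFReal 0 ⟨σ ^ 2, sq_nonneg σ⟩ x
      = (√(2 * π * σ ^ 2))⁻¹ * Real.exp (-(2 * σ ^ 2)⁻¹ * x ^ 2) := by
  have hσ2 : (0:ℝ) < σ ^ 2 := by positivity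
  simp only [gaussianPDFReal, NNReal.coe_mk]
  congr 1
  rw [sub_zero]
  congr 1
  change -x ^ 2 / (2 * σ ^ 2) = -(2 * σ ^ 2)⁻¹ * x ^ 2
  field_simp

lemma gauss_moment (hσ : 0 < σ) (m : ℕ) :
    Integrable (fun x : ℝ => (1 + |x|) ^ m) (gaussianReal 0 ⟨σ ^ 2, sq_nonneg σ⟩) := by
  have hb : (0:ℝ) < (2 * σ ^ 2)⁻¹ := by positivity
  rw [integrable_gauss_iff hσ]
  refine ((polyGauss_integrable hb m).const_mul (√(2 * π * σ ^ 2))⁻¹).congr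
    (ae_of_all _ fun x => ?_)
  simp only [gaussianPDFReal_exp hσ]
  ring

lemma gaussPi_prod_moment (hσ : 0 < σ) (m : ℕ) :
    ∀ n, Integrable (fun x : Fin n → ℝ => ∏ i, (1 + |x i|) ^ m) (gaussPi n σ) := by
  intro n
  induction n with
  | zero =>
      haveI := gaussPi_isProb σ 0
      simp only [Finset.univ_eq_empty, Finset.prod_empty]
      exact integrable_const 1
  | succ n ih =>
      haveI := gaussPi_isProb σ n
      have mp := (measurePreserving_piFinSuccAbove
        (fun _ : Fin (n + 1) => gaussianReal 0 ⟨σ ^ 2, sq_nonneg σ⟩) 0).symm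
      rw [gaussPi, ← mp.integrable_comp_emb (MeasurableEquiv.measurableEmbedding _)]
      have : ((fun x : Fin (n+1) → ℝ => ∏ i, (1 + |x i|) ^ m) ∘
          (MeasurableEquiv.piFinSuccAbove (fun _ => ℝ) 0).symm)
          = fun p : ℝ × (Fin n → ℝ) => (1 + |p.1|) ^ m * ∏ i, (1 + |p.2 i|) ^ m := by
        ext p
        simp only [Function.comp, MeasurableEquiv.piFinSuccAbove_symm_apply, Fin.insertNthEquiv,
          Equiv.coe_fn_mk, Fin.insertNth_zero, Fin.prod_univ_succ, Fin.cons_zero, Fin.cons_succ, cast_eq]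
      rw [this]
      exact Integrable.mul_prod (gauss_moment hσ m) ih

lemma one_add_sum_le_prod {ι : Type*} (s : Finset ι) (a : ι → ℝ) (ha : ∀ i, 0 ≤ a i) :
    1 + ∑ i ∈ s, a i ≤ ∏ i ∈ s, (1 + a i) := by
  classical
  induction s using Finset.cons_induction with
  | empty => simp
  | cons j s hj ih =>
      rw [Finset.sum_cons, Finset.prod_cons]
      have hs : (0:ℝ) ≤ ∑ i ∈ s, a i := Finset.sum_nonneg fun i _ => ha i
      nlinarith [ha j, ih]

lemma gaussPi_moment (hσ : 0 < σ) (m : ℕ) (n : ℕ) :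
    Integrable (fun x : Fin n → ℝ => (1 + ‖x‖) ^ m) (gaussPi n σ) := by
  refine (gaussPi_prod_moment hσ m n).mono' ?_ (ae_of_all _ fun x => ?_)
  · exact ((continuous_const.add continuous_norm).pow m).aestronglyMeasurable
  · have h1 : ‖x‖ ≤ ∑ i, |x i| := by
      refine (pi_norm_le_iff_of_nonneg (Finset.sum_nonneg fun i _ => abs_nonneg (x i))).2
        fun i => ?_
      rw [Real.norm_eq_abs]
      exact Finset.single_le_sum (fun j _ => abs_nonneg (x j)) (Finset.mem_univ i)
    have h2 : 1 + ‖x‖ ≤ ∏ i, (1 + |x i|) := by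
      calc 1 + ‖x‖ ≤ 1 + ∑ i, |x i| := by linarith
        _ ≤ ∏ i, (1 + |x i|) := one_add_sum_le_prod _ _ fun i => abs_nonneg (x i)
    rw [Real.norm_eq_abs, abs_of_nonneg (by positivity)]
    calc (1 + ‖x‖) ^ m ≤ (∏ i, (1 + |x i|)) ^ m :=
          pow_le_pow_left₀ (by positivity) h2 m
      _ = ∏ i, (1 + |x i|) ^ m := by rw [Finset.prod_pow]

end Moments

section Main

variable {σ : ℝ}

lemma insertNth_eq_add_smul {n : ℕ} (j : Fin (n + 1)) (z : Fin n → ℝ) (t : ℝ) :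
    (j.insertNth t z : Fin (n + 1) → ℝ) = (j.insertNth 0 z : Fin (n + 1) → ℝ) + t • (Pi.single j 1 : Fin (n + 1) → ℝ) := by
  funext i
  refine Fin.succAboveCases j ?_ ?_ i
  · simp [Fin.insertNth_apply_same, Pi.single_eq_same]
  · intro k
    simp [Fin.insertNth_apply_succAbove, Pi.single_eq_of_ne (Fin.succAbove_ne j k)]

lemma norm_insertNth_le {n : ℕ} (j : Fin (n + 1)) (z : Fin n → ℝ) (t : ℝ) :
    ‖(j.insertNth t z : Fin (n + 1) → ℝ)‖ ≤ |t| + ‖z‖ := by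
  refine (pi_norm_le_iff_of_nonneg (by positivity)).2 fun i => ?_
  refine Fin.succAboveCases j ?_ ?_ i
  · rw [Fin.insertNth_apply_same, Real.norm_eq_abs]
    linarith [norm_nonneg z]
  · intro k
    rw [Fin.insertNth_apply_succAbove]
    have := norm_le_pi_norm z k
    rw [Real.norm_eq_abs] at this ⊢
    linarith [abs_nonneg t]

/-- Multivariate Stein identity for the isotropic Gaussian `N(0, σ² I)` on `ℝⁿ`:
`E[⟨W, F(W)⟩] = σ² E[div F(W)]`, where `div F(x) = ∑ⱼ ∂Fⱼ/∂xⱼ(x)`. -/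
theorem stein_identity_multivariate {n : ℕ} (σ : ℝ) (hσ : 0 < σ)
    (F : (Fin n → ℝ) → (Fin n → ℝ)) (hF : ContDiff ℝ 1 F)
    (hFj : ∀ j, Integrable (fun x => F x j) (gaussPi n σ))
    (hdiv : ∀ j, Integrable (fun x => fderiv ℝ F x (Pi.single j 1) j) (gaussPi n σ))
    (hinner : Integrable (fun x => ∑ i, x i * F x i) (gaussPi n σ))
    (hgrowth : ∃ C : ℝ, ∃ k : ℕ, ∀ x, ‖F x‖ ≤ C * (1 + ‖x‖) ^ k) :
    ∫ x, (∑ i, x i * F x i) ∂(gaussPi n σ)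
      = σ ^ 2 * ∫ x, (∑ j, fderiv ℝ F x (Pi.single j 1) j) ∂(gaussPi n σ) := by
  obtain ⟨C, k, hC⟩ := hgrowth
  have hC0 : 0 ≤ C := by
    have h0 := (norm_nonneg (F 0)).trans (hC 0)
    simpa using h0
  cases n with
  | zero => simp
  | succ n =>
    haveI := gaussPi_isProb σ n
    haveI := gaussPi_isProb σ (n + 1)
    set ν : Measure ℝ := gaussianReal 0 ⟨σ ^ 2, sq_nonneg σ⟩ with hν
    -- integrability of each summand on the left
    have hxFj : ∀ j : Fin (n + 1),
        Integrable (fun x : Fin (n + 1) → ℝ => x j * F x j) (gaussPi (n + 1) σ) := by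
      intro j
      refine ((gaussPi_moment hσ (k + 1) (n + 1)).const_mul C).mono' ?_
        (ae_of_all _ fun x => ?_)
      · exact ((continuous_apply j).mul
          (((continuous_apply j).comp hF.continuous))).aestronglyMeasurable
      · rw [Real.norm_eq_abs, abs_mul]
        have h1 : |x j| ≤ 1 + ‖x‖ := by
          have := norm_le_pi_norm x j
          rw [Real.norm_eq_abs] at this
          linarith
        have h2 : |F x j| ≤ C * (1 + ‖x‖) ^ k := by
          have := norm_le_pi_norm (F x) j
          rw [Real.norm_eq_abs] at this
          exact this.trans (hC x)
        calc |x j| * |F x j| ≤ (1 + ‖x‖) * (C * (1 + ‖x‖) ^ k) :=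
              mul_le_mul h1 h2 (abs_nonneg _) (by positivity)
          _ = C * (1 + ‖x‖) ^ (k + 1) := by rw [pow_succ]; ring
    -- the key coordinatewise identity
    have key : ∀ j : Fin (n + 1),
        ∫ x, x j * F x j ∂(gaussPi (n + 1) σ)
          = σ ^ 2 * ∫ x, fderiv ℝ F x (Pi.single j 1) j ∂(gaussPi (n + 1) σ) := by
      intro j
      set e := MeasurableEquiv.piFinSuccAbove (fun _ : Fin (n + 1) => ℝ) j with he
      have mp : MeasurePreserving (⇑e.symm) (ν.prod (gaussPi n σ)) (gaussPi (n + 1) σ) :=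
        (measurePreserving_piFinSuccAbove (fun _ : Fin (n + 1) => ν) j).symm
      have hΦ : ∀ p : ℝ × (Fin n → ℝ), e.symm p = (j.insertNth p.1 p.2 : Fin (n + 1) → ℝ) := by
        intro p
        simp [he, MeasurableEquiv.piFinSuccAbove_symm_apply, Fin.insertNthEquiv]
      -- transport both integrals to the product measure
      have hI1 : ∫ x, x j * F x j ∂(gaussPi (n + 1) σ)
          = ∫ p : ℝ × (Fin n → ℝ), p.1 * F ((j.insertNth p.1 p.2 : Fin (n + 1) → ℝ)) j ∂(ν.prod (gaussPi n σ)) := by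
        rw [← mp.integral_comp e.symm.measurableEmbedding]
        exact integral_congr_ae (ae_of_all _ fun p =>
          by simp only [hΦ p, Fin.insertNth_apply_same])
      have hI2 : ∫ x, fderiv ℝ F x (Pi.single j 1) j ∂(gaussPi (n + 1) σ)
          = ∫ p : ℝ × (Fin n → ℝ), fderiv ℝ F ((j.insertNth p.1 p.2 : Fin (n + 1) → ℝ)) (Pi.single j 1) j
              ∂(ν.prod (gaussPi n σ)) := by
        rw [← mp.integral_comp e.symm.measurableEmbedding]
        exact integral_congr_ae (ae_of_all _ fun p => by simp only [hΦ p])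
      -- integrability on the product measure
      have hP1 : Integrable (fun p : ℝ × (Fin n → ℝ) => p.1 * F ((j.insertNth p.1 p.2 : Fin (n + 1) → ℝ)) j)
          (ν.prod (gaussPi n σ)) := by
        have := (mp.integrable_comp_emb e.symm.measurableEmbedding).2 (hxFj j)
        refine this.congr (ae_of_all _ fun p => ?_)
        simp only [Function.comp, hΦ p, Fin.insertNth_apply_same]
      have hP2 : Integrable
          (fun p : ℝ × (Fin n → ℝ) => fderiv ℝ F ((j.insertNth p.1 p.2 : Fin (n + 1) → ℝ)) (Pi.single j 1) j)
          (ν.prod (gaussPi n σ)) := by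
        have := (mp.integrable_comp_emb e.symm.measurableEmbedding).2 (hdiv j)
        refine this.congr (ae_of_all _ fun p => ?_)
        simp only [Function.comp, hΦ p]
      rw [hI1, hI2, integral_prod_symm _ hP1, integral_prod_symm _ hP2, ← integral_const_mul]
      refine integral_congr_ae ?_
      filter_upwards [hP2.prod_left_ae] with z hz2
      -- one-dimensional Stein identity in the coordinate `j`, for fixed `z`
      set w : Fin (n + 1) → ℝ := Pi.single j 1 with hw
      set fz : ℝ → ℝ := fun t => F ((j.insertNth t z : Fin (n + 1) → ℝ)) j with hfz
      have hcurve : ∀ t : ℝ, HasDerivAt (fun s : ℝ => (j.insertNth s z : Fin (n + 1) → ℝ)) w t := by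
        intro t
        have : (fun s : ℝ => (j.insertNth s z : Fin (n + 1) → ℝ))
            = fun s : ℝ => (j.insertNth 0 z : Fin (n + 1) → ℝ) + s • w := by
          funext s; exact insertNth_eq_add_smul j z s
        rw [this]
        simpa [one_smul] using ((hasDerivAt_id t).smul_const w).const_add (j.insertNth 0 z)
      have hder : ∀ t : ℝ, HasDerivAt fz (fderiv ℝ F ((j.insertNth t z : Fin (n + 1) → ℝ)) w j) t := by
        intro t
        have h1 : HasDerivAt (fun s : ℝ => F (j.insertNth s z))
            (fderiv ℝ F (j.insertNth t z) w) t :=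
          (hF.differentiable one_ne_zero _).hasFDerivAt.comp_hasDerivAt t (hcurve t)
        have h2 := (ContinuousLinearMap.proj (R := ℝ) (φ := fun _ : Fin (n + 1) => ℝ)
          j).hasFDerivAt.comp_hasDerivAt t h1
        exact h2
      have hderiv_eq : deriv fz = fun t => fderiv ℝ F ((j.insertNth t z : Fin (n + 1) → ℝ)) w j :=
        funext fun t => (hder t).deriv
      have hcont : ContDiff ℝ 1 fz := by
        have hcc : ContDiff ℝ 1 (fun s : ℝ => (j.insertNth s z : Fin (n + 1) → ℝ)) := by
          have : (fun s : ℝ => (j.insertNth s z : Fin (n + 1) → ℝ))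
              = fun s : ℝ => (j.insertNth 0 z : Fin (n + 1) → ℝ) + s • w := by
            funext s; exact insertNth_eq_add_smul j z s
          rw [this]
          exact contDiff_const.add (contDiff_id.smul contDiff_const)
        exact (contDiff_pi.1 (hF.comp hcc) j)
      have hgrow : ∃ C' : ℝ, ∃ k' : ℕ, ∀ t, |fz t| ≤ C' * (1 + |t|) ^ k' := by
        refine ⟨C * (1 + ‖z‖) ^ k, k, fun t => ?_⟩
        have h1 : |fz t| ≤ ‖F ((j.insertNth t z : Fin (n + 1) → ℝ))‖ := by
          have := norm_le_pi_norm (F ((j.insertNth t z : Fin (n + 1) → ℝ))) j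
          rwa [Real.norm_eq_abs] at this
        have h2 : ‖F ((j.insertNth t z : Fin (n + 1) → ℝ))‖ ≤ C * (1 + ‖(j.insertNth t z : Fin (n + 1) → ℝ)‖) ^ k := hC _
        have h3 : (1 + ‖(j.insertNth t z : Fin (n + 1) → ℝ)‖) ≤ (1 + |t|) * (1 + ‖z‖) := by
          have := norm_insertNth_le j z t
          nlinarith [abs_nonneg t, norm_nonneg z]
        calc |fz t| ≤ C * (1 + ‖(j.insertNth t z : Fin (n + 1) → ℝ)‖) ^ k := h1.trans h2
          _ ≤ C * ((1 + |t|) * (1 + ‖z‖)) ^ k := by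
              apply mul_le_mul_of_nonneg_left _ hC0
              exact pow_le_pow_left₀ (by positivity) h3 k
          _ = C * (1 + ‖z‖) ^ k * (1 + |t|) ^ k := by rw [mul_pow]; ring
      have hint : Integrable (deriv fz) ν := by
        rw [hderiv_eq]
        exact hz2
      have := stein1D hσ hcont hgrow hint
      rw [hderiv_eq] at this
      exact this
    -- sum up over the coordinates
    rw [integral_finset_sum Finset.univ (fun j _ => hxFj j),
        integral_finset_sum Finset.univ (fun j _ => hdiv j), Finset.mul_sum]
    exact Finset.sum_congr rfl fun j _ => key j

end Main
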